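/- Two-stage equivalence, part (b): If x1* ∈ K1 is an optimal solution of the two-stage stochastic program, i.e. f1(x1*) + ∫_Y v*(x1*,y) dφ(y) = ρ, then the generalized moment problem admits an optimal solution whose first-stage measure is the Dirac measure δ_{x1*}; that is, there exists a nonnegative finite Borel measure μ2* supported in K2 whose pushforward under (x1,x2,y) ↦ (x1,y) equals δ_{x1*} ⊗ φ and which satisfies ∫ f1 dδ_{x1*} + ∫ f2 dμ2* = ρ₁₂. -/

import Mathlib

/-!
A measurable selection `y ↦ x2(y)` of second-stage minimisers at `x1*`, obtained by lexicographic
minimisation over the compact slices of `K2`, pushes `φ` forward to a measure `μ2` with marginal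
`δ_{x1*} ⊗ φ` and cost `∫ v*(x1*, y) dφ`, so the pair `(δ_{x1*}, μ2)` has cost `ρ`. Conversely,
since `f2 ≥ v*` on `K2`, every feasible pair `(μ1, μ2)` costs at least
`∫ f1 dμ1 + ∫ v* d(μ1 ⊗ φ) = ∫ (f1 + ∫ v* dφ) dμ1 ≥ ρ`. Hence `ρ₁₂ = ρ` is attained by the
Dirac pair.
-/

open MeasureTheory MvPolynomial Set

section MeasurableSelection

variable {β γ : Type*} [TopologicalSpace β] [TopologicalSpace γ]

theorem IsClosed.image_fst_of_isCompact {K : Set (β × γ)} (hK : IsClosed K) {C : Set γ}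
    (hC : IsCompact C) (hKC : ∀ z ∈ K, z.2 ∈ C) : IsClosed (Prod.fst '' K) := by
  have : CompactSpace C := isCompact_iff_compactSpace.mp hC
  have hKC' : IsClosed {w : β × C | (w.1, (w.2 : γ)) ∈ K} := hK.preimage (by fun_prop)
  convert isClosedMap_fst_of_compactSpace _ hKC'
  ext b
  exact ⟨fun ⟨z, hz, hb⟩ => ⟨(b, ⟨z.2, hKC z hz⟩), hb ▸ hz, rfl⟩,
    fun ⟨w, hw, hb⟩ => ⟨_, hw, hb⟩⟩

theorem IsClosed.isCompact_slice {K : Set (β × γ)} (hK : IsClosed K) {C : Set γ}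
    (hC : IsCompact C) (hKC : ∀ z ∈ K, z.2 ∈ C) (b : β) : IsCompact {x | (b, x) ∈ K} :=
  hC.of_isClosed_subset (hK.preimage (Continuous.prodMk_right b)) fun _ hx => hKC _ hx

theorem IsClosed.isLeast_sInf_image_slice {K : Set (β × γ)} (hK : IsClosed K) {C : Set γ}
    (hC : IsCompact C) (hKC : ∀ z ∈ K, z.2 ∈ C) {f : β × γ → ℝ} (hf : Continuous f)
    {z : β × γ} (hz : z ∈ K) :
    IsLeast ((fun x => f (z.1, x)) '' {x | (z.1, x) ∈ K})
      (sInf ((fun x => f (z.1, x)) '' {x | (z.1, x) ∈ K})) :=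
  ((hK.isCompact_slice hC hKC z.1).image (by fun_prop)).isLeast_sInf ⟨_, z.2, hz, rfl⟩

theorem measurable_sInf_image_slice [MeasurableSpace β] [OpensMeasurableSpace β]
    {K : Set (β × γ)} (hK : IsClosed K) {C : Set γ} (hC : IsCompact C)
    (hKC : ∀ z ∈ K, z.2 ∈ C) {f : β × γ → ℝ} (hf : Continuous f) :
    Measurable fun b => sInf ((fun x => f (b, x)) '' {x | (b, x) ∈ K}) := by
  refine measurable_of_Iic fun r => ?_
  -- an empty slice has the junk infimum `sInf ∅ = 0`
  have hpre : (fun b => sInf ((fun x => f (b, x)) '' {x | (b, x) ∈ K})) ⁻¹' Iic r =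
      Prod.fst '' (K ∩ {z | f z ≤ r}) ∪ (Prod.fst '' K)ᶜ ∩ {_b | 0 ≤ r} := by
    ext b
    by_cases hb : b ∈ Prod.fst '' K
    · obtain ⟨z, hz, rfl⟩ := hb
      obtain ⟨⟨x, hx, hxmin⟩, hmin⟩ := hK.isLeast_sInf_image_slice hC hKC hf hz
      simp only [mem_preimage, mem_Iic, mem_union, mem_inter_iff, mem_compl_iff,
        mem_image_of_mem _ hz, not_true_eq_false, false_and, or_false]
      refine ⟨fun hle => ⟨_, ⟨hx, hxmin.trans_le hle⟩, rfl⟩, ?_⟩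
      rintro ⟨w, ⟨hw, hwr⟩, hw1⟩
      exact (hmin ⟨w.2, by simpa [← hw1] using hw, by simp [← hw1]⟩).trans hwr
    · have : {x | (b, x) ∈ K} = ∅ := eq_empty_of_forall_notMem fun x hx => hb ⟨_, hx, rfl⟩
      simpa [this, hb] using fun x hx _ => (hb ⟨_, hx, rfl⟩).elim
  rw [hpre]
  exact ((hK.inter (isClosed_le hf continuous_const)).image_fst_of_isCompact hC
    fun z hz => hKC z hz.1).measurableSet.union
    ((hK.image_fst_of_isCompact hC hKC).measurableSet.compl.inter (MeasurableSet.const _))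

theorem exists_measurable_selection_of_isClosed {n : ℕ} {β : Type*} [TopologicalSpace β]
    [MeasurableSpace β] [OpensMeasurableSpace β] {K : Set (β × (Fin n → ℝ))} (hK : IsClosed K)
    {C : Set (Fin n → ℝ)} (hC : IsCompact C) (hKC : ∀ z ∈ K, z.2 ∈ C) :
    ∃ σ : β → Fin n → ℝ, Measurable σ ∧ ∀ z ∈ K, (z.1, σ z.1) ∈ K := by
  induction n generalizing β with
  | zero => exact ⟨fun _ => 0, measurable_const, fun z hz => by
      rwa [show (0 : Fin 0 → ℝ) = z.2 from Subsingleton.elim _ _]⟩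
  | succ n ih =>
    -- minimise the first coordinate, then select in the remaining ones; the minimum `a` is only
    -- measurable, so it enters `K'` as a parameter to keep `K'` closed
    set a : β → ℝ := fun b => sInf ((fun x => x 0) '' {x | (b, x) ∈ K})
    have ha : Measurable a := measurable_sInf_image_slice hK hC hKC (f := fun w => w.2 0)
      (by fun_prop)
    set K' : Set ((β × ℝ) × (Fin n → ℝ)) := {w | (w.1.1, Fin.cons w.1.2 w.2) ∈ K}
    have hK' : IsClosed K' := hK.preimage (by fun_prop)
    obtain ⟨σ, hσ, hσK⟩ := ih hK' (hC.image (f := Fin.tail) (by fun_prop))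
      fun w hw => ⟨_, hKC _ hw, Fin.tail_cons _ _⟩
    refine ⟨fun b => Fin.cons (a b) (σ (b, a b)), ?_, fun z hz => ?_⟩
    · have hcons : Continuous fun p : ℝ × (Fin n → ℝ) => (Fin.cons p.1 p.2 : Fin (n + 1) → ℝ) :=
        by fun_prop
      exact hcons.measurable.comp (ha.prodMk (hσ.comp (measurable_id.prodMk ha)))
    · obtain ⟨x, hx, hx0⟩ := (hK.isLeast_sInf_image_slice hC hKC (f := fun w => w.2 0)
        (by fun_prop) hz).1
      exact hσK ((z.1, a z.1), Fin.tail x) (by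
        show (z.1, Fin.cons (a z.1) (Fin.tail x)) ∈ K
        rwa [show a z.1 = x 0 from hx0.symm, Fin.cons_self_tail])

theorem exists_measurable_argmin_of_isClosed {n : ℕ} {β : Type*} [TopologicalSpace β]
    [MeasurableSpace β] [OpensMeasurableSpace β] {K : Set (β × (Fin n → ℝ))} (hK : IsClosed K)
    {C : Set (Fin n → ℝ)} (hC : IsCompact C) (hKC : ∀ z ∈ K, z.2 ∈ C)
    {f : β × (Fin n → ℝ) → ℝ} (hf : Continuous f) :
    ∃ σ : β → Fin n → ℝ, Measurable σ ∧ ∀ z ∈ K, (z.1, σ z.1) ∈ K ∧ f (z.1, σ z.1) ≤ f z := by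
  set m : β → ℝ := fun b => sInf ((fun x => f (b, x)) '' {x | (b, x) ∈ K})
  -- `m` is only measurable, so the level enters `K'` as a parameter to keep `K'` closed
  set K' : Set ((β × ℝ) × (Fin n → ℝ)) := {w | (w.1.1, w.2) ∈ K ∧ f (w.1.1, w.2) ≤ w.1.2}
  have hK' : IsClosed K' :=
    (hK.preimage (by fun_prop)).inter (isClosed_le (hf.comp (by fun_prop)) (by fun_prop))
  obtain ⟨σ, hσ, hσK⟩ := exists_measurable_selection_of_isClosed hK' hC fun w hw => hKC _ hw.1
  refine ⟨fun b => σ (b, m b), hσ.comp (measurable_id.prodMk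
    (measurable_sInf_image_slice hK hC hKC hf)), fun z hz => ?_⟩
  obtain ⟨⟨x, hx, hxm⟩, hmin⟩ := hK.isLeast_sInf_image_slice hC hKC hf hz
  obtain ⟨hσz, hσm⟩ := hσK ((z.1, m z.1), x) ⟨hx, hxm.le⟩
  exact ⟨hσz, hσm.trans (hmin ⟨z.2, hz, rfl⟩)⟩

end MeasurableSelection

section SecondStage

variable {X Z Y : Type*}

/-- The second-stage value function `v*`. -/
noncomputable def secondStageValue (K : Set (X × Z × Y)) (F : X × Z → ℝ) (x : X) (y : Y) : ℝ :=
  sInf {c | ∃ z, (x, z, y) ∈ K ∧ c = F (x, z)}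

variable {K : Set (X × Z × Y)} {F : X × Z → ℝ} {B : ℝ} {x : X} {z : Z} {y : Y}

theorem secondStageValue_le (hB : ∀ t ∈ K, ‖F (t.1, t.2.1)‖ ≤ B) (h : (x, z, y) ∈ K) :
    secondStageValue K F x y ≤ F (x, z) :=
  csInf_le ⟨-B, by rintro _ ⟨z', hz', rfl⟩; exact neg_le_of_abs_le (hB _ hz')⟩ ⟨z, h, rfl⟩

theorem norm_secondStageValue_le (hB : ∀ t ∈ K, ‖F (t.1, t.2.1)‖ ≤ B) (h : (x, z, y) ∈ K) :
    ‖secondStageValue K F x y‖ ≤ B := by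
  refine abs_le.2 ⟨le_csInf ⟨_, z, h, rfl⟩ ?_,
    (secondStageValue_le hB h).trans (le_of_abs_le (hB _ h))⟩
  rintro _ ⟨z', hz', rfl⟩
  exact neg_le_of_abs_le (hB _ hz')

theorem secondStageValue_eq (h : (x, z, y) ∈ K)
    (hmin : ∀ z', (x, z', y) ∈ K → F (x, z) ≤ F (x, z')) : secondStageValue K F x y = F (x, z) :=
  IsLeast.csInf_eq ⟨⟨z, h, rfl⟩, by rintro _ ⟨z', hz', rfl⟩; exact hmin z' hz'⟩

theorem measurable_secondStageValue [TopologicalSpace X] [TopologicalSpace Y]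
    [TopologicalSpace Z] [MeasurableSpace X] [MeasurableSpace Y] [OpensMeasurableSpace (X × Y)]
    (hK : IsClosed K) {C : Set Z} (hC : IsCompact C) (hKC : ∀ t ∈ K, t.2.1 ∈ C)
    (hF : Continuous F) : Measurable fun w : X × Y => secondStageValue K F w.1 w.2 := by
  convert measurable_sInf_image_slice (K := {w : (X × Y) × Z | (w.1.1, w.2, w.1.2) ∈ K})
    (hK.preimage (by fun_prop)) hC (fun w hw => hKC _ hw) (f := fun w => F (w.1.1, w.2))
    (by fun_prop) using 1 with w
  funext w
  unfold secondStageValue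
  congr 1
  ext c
  exact ⟨fun ⟨z, hz, hc⟩ => ⟨z, hz, hc.symm⟩, fun ⟨z, hz, hc⟩ => ⟨z, hz, hc.symm⟩⟩

end SecondStage

theorem integral_integral_le_integral_of_map_eq_prod {X Z Y : Type*} [MeasurableSpace X]
    [MeasurableSpace Z] [MeasurableSpace Y] {μ : Measure X} {φ : Measure Y} [SFinite μ]
    [SFinite φ] {ν : Measure (X × Z × Y)} (hν : ν.map (fun t => (t.1, t.2.2)) = μ.prod φ)
    {V : X × Y → ℝ} (hV : Integrable V (μ.prod φ)) {G : X × Z × Y → ℝ} (hG : Integrable G ν)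
    (hVG : ∀ᵐ t ∂ν, V (t.1, t.2.2) ≤ G t) : ∫ x, ∫ y, V (x, y) ∂φ ∂μ ≤ ∫ t, G t ∂ν := by
  have hπ : Measurable fun t : X × Z × Y => (t.1, t.2.2) := by fun_prop
  have hV' : Integrable V (ν.map fun t => (t.1, t.2.2)) := hν ▸ hV
  calc ∫ x, ∫ y, V (x, y) ∂φ ∂μ = ∫ w, V w ∂(μ.prod φ) := (integral_prod V hV).symm
    _ = ∫ t, V (t.1, t.2.2) ∂ν := by
        rw [← hν, integral_map hπ.aemeasurable hV'.aestronglyMeasurable]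
    _ ≤ ∫ t, G t ∂ν :=
        integral_mono_ae ((integrable_map_measure hV'.aestronglyMeasurable hπ.aemeasurable).1 hV')
          hG hVG

section TwoStage

variable {X Y : Type*} [TopologicalSpace X] [T2Space X]
  [MeasurableSpace X] [OpensMeasurableSpace X] [TopologicalSpace Y] [T2Space Y]
  [SecondCountableTopology Y] [MeasurableSpace Y] [OpensMeasurableSpace Y] {n : ℕ}
  {K : Set (X × (Fin n → ℝ) × Y)} {F : X × (Fin n → ℝ) → ℝ}

/-- The two-stage optimal value `ρ`. -/
noncomputable def twoStageValue (K1 : Set X) (F1 : X → ℝ) (K : Set (X × (Fin n → ℝ) × Y))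
    (F : X × (Fin n → ℝ) → ℝ) (φ : Measure Y) : ℝ :=
  sInf {c | ∃ x ∈ K1, c = F1 x + ∫ y, secondStageValue K F x y ∂φ}

theorem exists_map_eq_dirac_prod_integral_eq (hK : IsCompact K) (hF : Continuous F) (x₀ : X)
    {φ : Measure Y} [IsProbabilityMeasure φ] {S : Set Y} (hS : φ Sᶜ = 0)
    (hfeas : ∀ y ∈ S, ∃ z, (x₀, z, y) ∈ K) :
    ∃ μ : Measure (X × (Fin n → ℝ) × Y), IsProbabilityMeasure μ ∧ μ Kᶜ = 0 ∧
      μ.map (fun t => (t.1, t.2.2)) = (Measure.dirac x₀).prod φ ∧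
      ∫ t, F (t.1, t.2.1) ∂μ = ∫ y, secondStageValue K F x₀ y ∂φ := by
  obtain ⟨σ, hσ, hσK⟩ := exists_measurable_argmin_of_isClosed
    (K := {w : Y × (Fin n → ℝ) | (x₀, w.2, w.1) ∈ K}) (hK.isClosed.preimage (by fun_prop))
    (hK.image (f := fun t => t.2.1) (by fun_prop)) (fun w hw => ⟨_, hw, rfl⟩)
    (f := fun w => F (x₀, w.2)) (by fun_prop)
  have hsel : ∀ y ∈ S, (x₀, σ y, y) ∈ K ∧ F (x₀, σ y) = secondStageValue K F x₀ y := by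
    intro y hy
    obtain ⟨z, hz⟩ := hfeas y hy
    have hσy := (hσK (y, z) hz).1
    exact ⟨hσy, (secondStageValue_eq hσy fun z' hz' => (hσK (y, z') hz').2).symm⟩
  set T : Y → X × (Fin n → ℝ) × Y := fun y => (x₀, σ y, y)
  have hT : Measurable T := measurable_const.prodMk (hσ.prodMk measurable_id)
  refine ⟨φ.map T, Measure.isProbabilityMeasure_map hT.aemeasurable, ?_, ?_, ?_⟩
  · rw [Measure.map_apply hT hK.isClosed.measurableSet.compl]
    exact measure_mono_null (fun y hy hyS => hy (hsel y hyS).1) hS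
  · rw [Measure.map_map (by fun_prop) hT, Measure.dirac_prod]
    rfl
  · have hFc : Continuous fun t : X × (Fin n → ℝ) × Y => F (t.1, t.2.1) := by fun_prop
    rw [integral_map hT.aemeasurable hFc.aestronglyMeasurable]
    exact integral_congr_ae ((ae_iff.2 hS).mono fun y hy => (hsel y hy).2)

theorem twoStageValue_le_integral_add_integral {K1 : Set X} {S : Set Y} (hK1 : IsCompact K1)
    (hK : IsCompact K) (hfeas : ∀ x ∈ K1, ∀ y ∈ S, ∃ z, (x, z, y) ∈ K) {F1 : X → ℝ}
    (hF1 : Continuous F1) (hF : Continuous F) {μ : Measure X} [IsProbabilityMeasure μ]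
    (hμ : μ K1ᶜ = 0) {φ : Measure Y} [IsProbabilityMeasure φ] (hφ : φ Sᶜ = 0)
    {ν : Measure (X × (Fin n → ℝ) × Y)} [IsFiniteMeasure ν] (hν : ν Kᶜ = 0)
    (hmap : ν.map (fun t => (t.1, t.2.2)) = μ.prod φ) :
    twoStageValue K1 F1 K F φ ≤ ∫ x, F1 x ∂μ + ∫ t, F (t.1, t.2.1) ∂ν := by
  obtain ⟨B1, hB1⟩ := hK1.exists_bound_of_continuousOn hF1.continuousOn
  obtain ⟨B, hB⟩ := hK.exists_bound_of_continuousOn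
    (by fun_prop : Continuous fun t : X × (Fin n → ℝ) × Y => F (t.1, t.2.1)).continuousOn
  have hμae : ∀ᵐ x ∂μ, x ∈ K1 := ae_iff.2 hμ
  have hφae : ∀ᵐ y ∂φ, y ∈ S := ae_iff.2 hφ
  have hVB : ∀ x ∈ K1, ∀ y ∈ S, ‖secondStageValue K F x y‖ ≤ B := fun x hx y hy =>
    (hfeas x hx y hy).elim fun _ hz => norm_secondStageValue_le hB hz
  have hV : Integrable (fun w : X × Y => secondStageValue K F w.1 w.2) (μ.prod φ) :=
    .of_bound (measurable_secondStageValue hK.isClosed (hK.image (f := fun t => t.2.1)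
      (by fun_prop)) (fun t ht => ⟨t, ht, rfl⟩) hF).aestronglyMeasurable B
      ((Measure.quasiMeasurePreserving_fst.ae hμae).and
        (Measure.quasiMeasurePreserving_snd.ae hφae) |>.mono fun w hw => hVB _ hw.1 _ hw.2)
  have hF1i : Integrable F1 μ := .of_bound hF1.aestronglyMeasurable B1 (hμae.mono hB1)
  have hbdd : ∀ x ∈ K1, -(B1 + B) ≤ F1 x + ∫ y, secondStageValue K F x y ∂φ := by
    intro x hx
    have hint := norm_integral_le_of_norm_le_const (hφae.mono (hVB x hx))
    rw [probReal_univ, mul_one] at hint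
    linarith [neg_le_of_abs_le (hB1 x hx), neg_le_of_abs_le hint]
  have hle : ∀ x ∈ K1, twoStageValue K1 F1 K F φ ≤ F1 x + ∫ y, secondStageValue K F x y ∂φ :=
    fun x hx => csInf_le ⟨_, by rintro _ ⟨x', hx', rfl⟩; exact hbdd x' hx'⟩ ⟨x, hx, rfl⟩
  calc twoStageValue K1 F1 K F φ
      ≤ ∫ x, (F1 x + ∫ y, secondStageValue K F x y ∂φ) ∂μ := by
        simpa using integral_mono_ae (integrable_const _) (hF1i.add hV.integral_prod_left)
          (hμae.mono hle)
    _ = ∫ x, F1 x ∂μ + ∫ x, ∫ y, secondStageValue K F x y ∂φ ∂μ :=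
        integral_add hF1i hV.integral_prod_left
    _ ≤ ∫ x, F1 x ∂μ + ∫ t, F (t.1, t.2.1) ∂ν := by
        have hνae : ∀ᵐ t ∂ν, t ∈ K := ae_iff.2 hν
        gcongr
        exact integral_integral_le_integral_of_map_eq_prod hmap hV
          (.of_bound (by fun_prop : Continuous fun t : X × (Fin n → ℝ) × Y =>
            F (t.1, t.2.1)).aestronglyMeasurable B (hνae.mono hB))
          (hνae.mono fun t ht => secondStageValue_le hB ht)

end TwoStage

theorem gmp_dirac_optimal_solution_general
    (n1 n2 p : ℕ)
    (f1 : MvPolynomial (Fin n1) ℝ) (f2 : MvPolynomial (Fin n1 ⊕ Fin n2) ℝ)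
    (K1 : Set (Fin n1 → ℝ)) (Y : Set (Fin p → ℝ))
    (K2 : Set ((Fin n1 → ℝ) × (Fin n2 → ℝ) × (Fin p → ℝ)))
    (φ : Measure (Fin p → ℝ)) (hφ : IsProbabilityMeasure φ) (hφY : φ Yᶜ = 0)
    (hK1c : IsCompact K1) (hK2c : IsCompact K2)
    (hfeas : ∀ x1 ∈ K1, ∀ y ∈ Y, ∃ x2, (x1, x2, y) ∈ K2)
    (v : (Fin n1 → ℝ) → (Fin p → ℝ) → ℝ)
    (hv : ∀ x1 y, v x1 y =
      sInf {c | ∃ x2, (x1, x2, y) ∈ K2 ∧ c = eval (Sum.elim x1 x2) f2})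
    (ρ ρ12 : ℝ)
    (hρ : ρ = sInf {c | ∃ x1 ∈ K1, c = eval x1 f1 + ∫ y in Y, v x1 y ∂φ})
    (hρ12 : ρ12 = sInf {c | ∃ (μ1 : Measure (Fin n1 → ℝ))
        (μ2 : Measure ((Fin n1 → ℝ) × (Fin n2 → ℝ) × (Fin p → ℝ))),
      IsProbabilityMeasure μ1 ∧ IsFiniteMeasure μ2 ∧
      μ1 K1ᶜ = 0 ∧ μ2 K2ᶜ = 0 ∧
      Measure.map (fun t => (t.1, t.2.2)) μ2 = μ1.prod φ ∧
      c = (∫ x1, eval x1 f1 ∂μ1) + ∫ t, eval (Sum.elim t.1 t.2.1) f2 ∂μ2})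
    (x1s : Fin n1 → ℝ) (hx1s : x1s ∈ K1)
    (hopt : eval x1s f1 + ∫ y in Y, v x1s y ∂φ = ρ) :
    ∃ μ2 : Measure ((Fin n1 → ℝ) × (Fin n2 → ℝ) × (Fin p → ℝ)),
      IsFiniteMeasure μ2 ∧ μ2 K2ᶜ = 0 ∧
      Measure.map (fun t => (t.1, t.2.2)) μ2 = (Measure.dirac x1s).prod φ ∧
      (∫ x1, eval x1 f1 ∂(Measure.dirac x1s)) +
        (∫ t, eval (Sum.elim t.1 t.2.1) f2 ∂μ2) = ρ12 := by
  set F2 : (Fin n1 → ℝ) × (Fin n2 → ℝ) → ℝ := fun w => eval (Sum.elim w.1 w.2) f2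
  have hF2 : Continuous F2 := f2.continuous_eval.comp
    (Homeomorph.sumPiEquivProdPi (Fin n1) (Fin n2) fun _ => ℝ).symm.continuous
  obtain rfl : v = secondStageValue K2 F2 := funext fun x1 => funext (hv x1)
  rw [Measure.restrict_eq_self_of_ae_mem (ae_iff.2 hφY)] at hρ hopt
  obtain ⟨μ2, hμ2, hμ2K2, hmarg, hobj⟩ :=
    exists_map_eq_dirac_prod_integral_eq hK2c hF2 x1s hφY (hfeas x1s hx1s)
  have hval : (∫ x1, eval x1 f1 ∂(Measure.dirac x1s)) + ∫ t, F2 (t.1, t.2.1) ∂μ2 = ρ := by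
    rw [integral_dirac, hobj, hopt]
  refine ⟨μ2, inferInstance, hμ2K2, hmarg, hval.trans ?_⟩
  rw [hρ12]
  refine (IsLeast.csInf_eq ⟨?_, ?_⟩).symm
  · exact ⟨_, μ2, inferInstance, inferInstance, by simp [hx1s], hμ2K2, hmarg, hval.symm⟩
  · rintro c ⟨μ1, ν, hμ1, hν, h1, h2, hmap, rfl⟩
    exact hρ ▸ twoStageValue_le_integral_add_integral hK1c hK2c hfeas f1.continuous_eval hF2 h1
      hφY h2 hmap

/-- **Theorem 1(b).** If `x1s ∈ K1` is an optimal solution of the two-stage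
stochastic program, then the generalized moment problem admits an optimal solution whose
first-stage measure is the Dirac measure `δ_{x1s}`: there is a nonnegative finite Borel
measure `μ2` supported in `K2` whose pushforward under `(x1,x2,y) ↦ (x1,y)` is
`δ_{x1s} ⊗ φ` and whose objective value equals `ρ₁₂`. -/
theorem gmp_dirac_optimal_solution
    (n1 n2 p Nq Nh Ng NgY : ℕ) (hn1 : 0 < n1) (hn2 : 0 < n2) (hp : 0 < p)
    (f1 : MvPolynomial (Fin n1) ℝ) (f2 : MvPolynomial (Fin n1 ⊕ Fin n2) ℝ)
    (q : Fin Nq → MvPolynomial (Fin n1) ℝ)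
    (h : Fin Nh → MvPolynomial (Fin n1 ⊕ Fin n2 ⊕ Fin p) ℝ)
    (g : Fin Ng → MvPolynomial (Fin n1 ⊕ Fin n2 ⊕ Fin p) ℝ)
    (gY : Fin NgY → MvPolynomial (Fin p) ℝ)
    (K1 : Set (Fin n1 → ℝ)) (Y : Set (Fin p → ℝ))
    (K2 : Set ((Fin n1 → ℝ) × (Fin n2 → ℝ) × (Fin p → ℝ)))
    (hK1 : K1 = {x1 | ∀ l, 0 ≤ eval x1 (q l)})
    (hY : Y = {y | ∀ j, 0 ≤ eval y (gY j)})
    (hK2 : K2 = {t | t.1 ∈ K1 ∧ t.2.2 ∈ Y ∧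
      (∀ i, eval (Sum.elim t.1 (Sum.elim t.2.1 t.2.2)) (h i) = 0) ∧
      (∀ j, 0 ≤ eval (Sum.elim t.1 (Sum.elim t.2.1 t.2.2)) (g j))})
    (φ : Measure (Fin p → ℝ)) (hφ : IsProbabilityMeasure φ) (hφY : φ Yᶜ = 0)
    (hK1c : IsCompact K1) (hK2c : IsCompact K2) (hYc : IsCompact Y)
    (hK1ne : K1.Nonempty) (hYne : Y.Nonempty)
    (hfeas : ∀ x1 ∈ K1, ∀ y ∈ Y, ∃ x2, (x1, x2, y) ∈ K2)
    (v : (Fin n1 → ℝ) → (Fin p → ℝ) → ℝ)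
    (hv : ∀ x1 y, v x1 y =
      sInf {c | ∃ x2, (x1, x2, y) ∈ K2 ∧ c = eval (Sum.elim x1 x2) f2})
    (hvmeas : Measurable fun t : (Fin n1 → ℝ) × (Fin p → ℝ) => v t.1 t.2)
    (ρ ρ12 : ℝ)
    (hρ : ρ = sInf {c | ∃ x1 ∈ K1, c = eval x1 f1 + ∫ y in Y, v x1 y ∂φ})
    (hρ12 : ρ12 = sInf {c | ∃ (μ1 : Measure (Fin n1 → ℝ))
        (μ2 : Measure ((Fin n1 → ℝ) × (Fin n2 → ℝ) × (Fin p → ℝ))),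
      IsProbabilityMeasure μ1 ∧ IsFiniteMeasure μ2 ∧
      μ1 K1ᶜ = 0 ∧ μ2 K2ᶜ = 0 ∧
      Measure.map (fun t => (t.1, t.2.2)) μ2 = μ1.prod φ ∧
      c = (∫ x1, eval x1 f1 ∂μ1) + ∫ t, eval (Sum.elim t.1 t.2.1) f2 ∂μ2})
    (x1s : Fin n1 → ℝ) (hx1s : x1s ∈ K1)
    (hopt : eval x1s f1 + ∫ y in Y, v x1s y ∂φ = ρ) :
    ∃ μ2 : Measure ((Fin n1 → ℝ) × (Fin n2 → ℝ) × (Fin p → ℝ)),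
      IsFiniteMeasure μ2 ∧ μ2 K2ᶜ = 0 ∧
      Measure.map (fun t => (t.1, t.2.2)) μ2 = (Measure.dirac x1s).prod φ ∧
      (∫ x1, eval x1 f1 ∂(Measure.dirac x1s)) +
        (∫ t, eval (Sum.elim t.1 t.2.1) f2 ∂μ2) = ρ12 :=
  gmp_dirac_optimal_solution_general n1 n2 p f1 f2 K1 Y K2 φ hφ hφY hK1c hK2c hfeas v hv ρ ρ12 hρ
    hρ12 x1s hx1s hopt
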